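/- arXiv:1712.07684 — 3 statements merged into one kernel-verified Lean document; each statement's English description precedes it below -/
import Mathlib

section
/- There is a universal constant C such that for every τ > 0 and every C¹ function f on a neighborhood of Σ_τ in ℝ^{1+2} whose restriction to Σ_τ is compactly supported: ∫_{Σ_τ} (τ/t) f² dvol_{Σ_τ} ≤ C ∫_{Σ_τ} (1 + ρ²)(τ/t) ((L¹f)² + (L²f)²) dvol_{Σ_τ}, where ρ = arcosh(t/τ) at the integration point. -/
/-!
Common definitions: spacetime `ℝ^{1+d}` is modeled as `ℝ × (Fin d → ℝ)` with first
coordinate the time `t`.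
-/

noncomputable section

open Real MeasureTheory

/-- Spacetime `ℝ^{1+d}`. -/
abbrev Spt (d : ℕ) := ℝ × (Fin d → ℝ)

/-- Time derivative `∂_t f`. -/
def ptD {d : ℕ} (f : Spt d → ℝ) : Spt d → ℝ := fun p => fderiv ℝ f p (1, 0)

/-- Spatial derivative `∂_{x^i} f`. -/
def pxD {d : ℕ} (i : Fin d) (f : Spt d → ℝ) : Spt d → ℝ :=
  fun p => fderiv ℝ f p (0, Pi.single i 1)

/-- Lorentz boost `L^i f = t ∂_{x^i} f + x^i ∂_t f`. -/
def LbD {d : ℕ} (i : Fin d) (f : Spt d → ℝ) : Spt d → ℝ :=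
  fun p => p.1 * pxD i f p + p.2 i * ptD f p

/-- Iterated Lorentz boosts `L^α f = L^{α_m} ⋯ L^{α_1} f` for a multi-index `α`. -/
def Lmulti {d : ℕ} : List (Fin d) → (Spt d → ℝ) → Spt d → ℝ
  | [], f => f
  | i :: l, f => LbD i (Lmulti l f)

/-- Wave operator `□f = -∂_t² f + Σ_i ∂_{x^i}² f`. -/
def BoxD {d : ℕ} (f : Spt d → ℝ) : Spt d → ℝ :=
  fun p => -(ptD (ptD f) p) + ∑ i, pxD i (pxD i f) p

/-- Minkowski pairing `η(df, dg) = -∂_t f ∂_t g + Σ_i ∂_{x^i} f ∂_{x^i} g`. -/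
def etaD {d : ℕ} (f g : Spt d → ℝ) : Spt d → ℝ :=
  fun p => -(ptD f p * ptD g p) + ∑ i, pxD i f p * pxD i g p

/-- Morawetz field `K f = (t² + |x|²) ∂_t f + 2t Σ_i x^i ∂_{x^i} f`. -/
def KvD {d : ℕ} (f : Spt d → ℝ) : Spt d → ℝ :=
  fun p => (p.1 ^ 2 + ∑ i, p.2 i ^ 2) * ptD f p + 2 * p.1 * ∑ i, p.2 i * pxD i f p

/-- Euclidean norm `|x|` of a spatial point. -/
def spnorm {d : ℕ} (x : Fin d → ℝ) : ℝ := Real.sqrt (∑ i, x i ^ 2)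

/-- Hyperboloidal time `τ = √(t² - |x|²)`. -/
def tau {d : ℕ} (p : Spt d) : ℝ := Real.sqrt (p.1 ^ 2 - ∑ i, p.2 i ^ 2)

/-- `sobd d = ⌊d/2⌋ + 1`. -/
def sobd (d : ℕ) : ℕ := d / 2 + 1

/-- The hyperboloid `Σ_τ = {t² - |x|² = τ², t > 0}`. -/
def SigmaSet (d : ℕ) (τ : ℝ) : Set (Spt d) := {p | p.1 ^ 2 - ∑ i, p.2 i ^ 2 = τ ^ 2 ∧ 0 < p.1}

/-- Integral over the hyperboloid `Σ_τ` with respect to the induced volume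
`τ^d sinh(ρ)^{d-1} dρ dθ`; in the graph parameterization `t = √(τ² + |x|²)` of `Σ_τ`
over `ℝ^d` this volume form is exactly `(τ/t) dx`. -/
def hbInt (d : ℕ) (τ : ℝ) (F : Spt d → ℝ) : ℝ :=
  ∫ x : Fin d → ℝ,
    F (Real.sqrt (τ ^ 2 + ∑ i, x i ^ 2), x) * (τ / Real.sqrt (τ ^ 2 + ∑ i, x i ^ 2))

/-- Spatial partial derivative of a function on `ℝ^d`. -/
def pd {d : ℕ} (i : Fin d) (g : (Fin d → ℝ) → ℝ) : (Fin d → ℝ) → ℝ :=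
  fun x => fderiv ℝ g x (Pi.single i 1)

/-- Iterated spatial partial derivatives `∂^β g`. -/
def pdMulti {d : ℕ} : List (Fin d) → ((Fin d → ℝ) → ℝ) → (Fin d → ℝ) → ℝ
  | [], g => g
  | i :: l, g => pd i (pdMulti l g)

/-- Sobolev norm `‖g‖_{H^k(ℝ^d)}`. -/
def sobNorm {d : ℕ} (k : ℕ) (g : (Fin d → ℝ) → ℝ) : ℝ :=
  Real.sqrt (∑ m ∈ Finset.range (k + 1), ∑ β : Fin m → Fin d,
    ∫ x : Fin d → ℝ, (pdMulti (List.ofFn β) g x) ^ 2)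

/-- Initial energy `ℰ₀[f]² = ∫_{ℝ^d} (∂_t f(0,x))² + |∇_x f(0,x)|² dx`. -/
def E0 {d : ℕ} (f : Spt d → ℝ) : ℝ :=
  Real.sqrt (∫ x : Fin d → ℝ, ((ptD f (0, x)) ^ 2 + ∑ i, (pxD i f (0, x)) ^ 2))

/-- `|Lf| = ((L¹f)² + (L²f)²)^{1/2}` in two spatial dimensions. -/
def normL (f : Spt 2 → ℝ) (p : Spt 2) : ℝ := Real.sqrt ((LbD 0 f p) ^ 2 + (LbD 1 f p) ^ 2)

/-- The `∂_t`-energy `ℰ_τ[f]` on the hyperboloid `Σ_τ` (note `cosh ρ = t/τ`). -/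
def Ee (τ : ℝ) (f : Spt 2 → ℝ) : ℝ :=
  Real.sqrt (hbInt 2 τ fun p =>
    (τ ^ 2 * (p.1 / τ))⁻¹ * ((LbD 0 f p) ^ 2 + (LbD 1 f p) ^ 2) +
      (p.1 / τ)⁻¹ * (ptD f p) ^ 2)

/-- The `K`-energy `ℱ_τ[f]` on the hyperboloid `Σ_τ`. -/
def Fe (τ : ℝ) (f : Spt 2 → ℝ) : ℝ :=
  Real.sqrt (hbInt 2 τ fun p =>
    (p.1 / τ)⁻¹ * ((LbD 0 f p) ^ 2 + (LbD 1 f p) ^ 2) +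
      (τ ^ 2 * (p.1 / τ))⁻¹ * (KvD f p + p.1 * f p) ^ 2)

/-- `L^∞` norm of `f` along the hyperboloid `Σ_τ`. -/
def sigSup (τ : ℝ) (f : Spt 2 → ℝ) : ℝ :=
  ⨆ x : Fin 2 → ℝ, |f (Real.sqrt (τ ^ 2 + ∑ i, x i ^ 2), x)|

/-- Inverse hyperbolic cosine. -/
def arcoshR (x : ℝ) : ℝ := Real.log (x + Real.sqrt (x ^ 2 - 1))

/-!
On `Σ_τ`, parametrized as the graph `x ↦ (t, x)` with `t = √(τ² + |x|²)`, the volume is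
`(τ/t) dx` and `L^i f = t ∂_i g` for `g = f ∘ graph`, so the claim is the flat inequality
`∫ τ²/t² g² ≤ 16 ∫ τ² (1 + ρ²) |∇g|²` on `ℝ²`. To prove it, integrate `g²` against the divergence
of `V = τ² (log (t²/τ²) + 1/2) x / t²`: that divergence dominates `τ²/t²`, integration by parts
and `-2ab ≤ a²D/2 + 2b²/D` bound `∫ g² div V` by `4 ∫ (∇g·V)² / div V`, and the logarithm in `V`
only costs the weight `1 + ρ²` because `log (t²/τ²) ≤ 2ρ`.
-/

section Divergence

variable {n : ℕ}

lemma pd_sq {g : (Fin n → ℝ) → ℝ} {x : Fin n → ℝ} (hg : DifferentiableAt ℝ g x) (i : Fin n) :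
    pd i (fun y => g y ^ 2) x = 2 * g x * pd i g x := by
  simp [pd, fderiv_fun_pow, hg]

lemma continuous_pd {g : (Fin n → ℝ) → ℝ} (hg : ContDiff ℝ 1 g) (i : Fin n) :
    Continuous (pd i g) :=
  (hg.continuous_fderiv one_ne_zero).clm_apply continuous_const

lemma integral_sq_mul_sum_pd_eq {g : (Fin n → ℝ) → ℝ} {V : Fin n → (Fin n → ℝ) → ℝ}
    (hg : ContDiff ℝ 1 g) (hg_supp : HasCompactSupport g) (hV : ∀ i, ContDiff ℝ 1 (V i)) :
    ∫ x, g x ^ 2 * ∑ i, pd i (V i) x = -∫ x, 2 * g x * ∑ i, pd i g x * V i x := by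
  have hg_diff : Differentiable ℝ g := hg.differentiable one_ne_zero
  have hg2_supp : HasCompactSupport fun x => g x ^ 2 :=
    hg_supp.comp_left (g := fun y : ℝ => y ^ 2) (zero_pow two_ne_zero)
  have hterm_int (i : Fin n) : Integrable fun x => 2 * g x * pd i g x * V i x :=
    (((continuous_const.mul hg.continuous).mul (continuous_pd hg i)).mul
      (hV i).continuous).integrable_of_hasCompactSupport
      (hg_supp.fderiv_apply ℝ _).mul_left.mul_right
  have hdiv_int (i : Fin n) : Integrable fun x => g x ^ 2 * pd i (V i) x :=
    ((hg.continuous.pow 2).mul (continuous_pd (hV i) i)).integrable_of_hasCompactSupport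
      hg2_supp.mul_right
  have hibp (i : Fin n) : ∫ x, g x ^ 2 * pd i (V i) x = -∫ x, 2 * g x * pd i g x * V i x := by
    have h : ∫ x, g x ^ 2 * pd i (V i) x = -∫ x, pd i (fun y => g y ^ 2) x * V i x :=
      integral_mul_fderiv_eq_neg_fderiv_mul_of_integrable ?_ (hdiv_int i) ?_
        (fun x _ => (hg_diff x).pow 2) (fun x _ => (hV i).differentiable one_ne_zero x)
    · simpa only [pd_sq (hg_diff _)] using h
    · show Integrable fun x => pd i (fun y => g y ^ 2) x * V i x
      simpa only [pd_sq (hg_diff _)] using hterm_int i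
    · exact ((hg.continuous.pow 2).mul (hV i).continuous).integrable_of_hasCompactSupport
        hg2_supp.mul_right
  calc ∫ x, g x ^ 2 * ∑ i, pd i (V i) x = ∫ x, ∑ i, g x ^ 2 * pd i (V i) x := by
        simp_rw [Finset.mul_sum]
    _ = ∑ i, -∫ x, 2 * g x * pd i g x * V i x := by
        rw [integral_finsetSum _ fun i _ => hdiv_int i]
        exact Finset.sum_congr rfl fun i _ => hibp i
    _ = -∫ x, 2 * g x * ∑ i, pd i g x * V i x := by
        rw [Finset.sum_neg_distrib, ← integral_finsetSum _ fun i _ => hterm_int i]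
        simp_rw [Finset.mul_sum, mul_assoc]

lemma neg_two_mul_le_sq_mul_div_two_add {a b D : ℝ} (hD : 0 < D) :
    -(2 * a * b) ≤ a ^ 2 * D / 2 + 2 * (b ^ 2 / D) := by
  have h : a ^ 2 * D / 2 + 2 * (b ^ 2 / D) + 2 * a * b = (D * a + 2 * b) ^ 2 / (2 * D) := by
    field_simp
    ring
  have : 0 ≤ (D * a + 2 * b) ^ 2 / (2 * D) := by positivity
  linarith

theorem integral_sq_mul_le_of_sum_pd_eq {g D : (Fin n → ℝ) → ℝ} {V : Fin n → (Fin n → ℝ) → ℝ}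
    (hg : ContDiff ℝ 1 g) (hg_supp : HasCompactSupport g) (hV : ∀ i, ContDiff ℝ 1 (V i))
    (hdiv : ∀ x, ∑ i, pd i (V i) x = D x) (hD : ∀ x, 0 < D x) :
    ∫ x, g x ^ 2 * D x ≤ 4 * ∫ x, (∑ i, pd i g x * V i x) ^ 2 / D x := by
  set S := fun x => ∑ i, pd i g x * V i x
  have hD_cont : Continuous D := by
    rw [← funext hdiv]
    exact continuous_finsetSum _ fun i _ => continuous_pd (hV i) i
  have hS_cont : Continuous S :=
    continuous_finsetSum _ fun i _ => (continuous_pd hg i).mul (hV i).continuous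
  have hS_supp : HasCompactSupport S := hg_supp.mono' <| Function.support_subset_iff'.2
    fun x hx => by simp [S, pd, fderiv_of_notMem_tsupport ℝ hx]
  have hgS_int : Integrable fun x => 2 * g x * S x :=
    ((continuous_const.mul hg.continuous).mul hS_cont).integrable_of_hasCompactSupport
      hS_supp.mul_left
  have hgD_int : Integrable fun x => g x ^ 2 * D x :=
    ((hg.continuous.pow 2).mul hD_cont).integrable_of_hasCompactSupport
      (hg_supp.comp_left (g := fun y : ℝ => y ^ 2) (zero_pow two_ne_zero)).mul_right
  have hSD_int : Integrable fun x => S x ^ 2 / D x :=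
    ((hS_cont.pow 2).div hD_cont fun x => (hD x).ne').integrable_of_hasCompactSupport
      (hS_supp.mono (Function.support_subset_iff'.2 fun x hx => by
        simp [Function.notMem_support.1 hx]))
  have hint : ∫ x, g x ^ 2 * D x ≤ (∫ x, g x ^ 2 * D x) / 2 + 2 * ∫ x, S x ^ 2 / D x :=
    calc ∫ x, g x ^ 2 * D x = -∫ x, 2 * g x * S x := by
          simp_rw [← hdiv]
          exact integral_sq_mul_sum_pd_eq hg hg_supp hV
      _ = ∫ x, -(2 * g x * S x) := (integral_neg _).symm
      _ ≤ ∫ x, (g x ^ 2 * D x / 2 + 2 * (S x ^ 2 / D x)) :=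
          integral_mono hgS_int.neg ((hgD_int.div_const 2).add (hSD_int.const_mul 2))
            fun x => neg_two_mul_le_sq_mul_div_two_add (hD x)
      _ = (∫ x, g x ^ 2 * D x) / 2 + 2 * ∫ x, S x ^ 2 / D x := by
          rw [integral_add (hgD_int.div_const 2) (hSD_int.const_mul 2), integral_div,
            integral_const_mul]
  linarith

end Divergence

section Graph

variable {d : ℕ} {τ : ℝ}

def sigmaTimeSq (τ : ℝ) (x : Fin d → ℝ) : ℝ := τ ^ 2 + ∑ i, x i ^ 2

def sigmaTime (τ : ℝ) (x : Fin d → ℝ) : ℝ := √(sigmaTimeSq τ x)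

def sigmaGraph (τ : ℝ) (x : Fin d → ℝ) : Spt d := (sigmaTime τ x, x)

lemma sq_le_sigmaTimeSq (τ : ℝ) (x : Fin d → ℝ) : τ ^ 2 ≤ sigmaTimeSq τ x :=
  le_add_of_nonneg_right (by positivity)

lemma sigmaTimeSq_pos (hτ : τ ≠ 0) (x : Fin d → ℝ) : 0 < sigmaTimeSq τ x :=
  (by positivity : (0 : ℝ) < τ ^ 2).trans_le (sq_le_sigmaTimeSq τ x)

lemma sigmaTime_sq (x : Fin d → ℝ) : sigmaTime τ x ^ 2 = sigmaTimeSq τ x :=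
  Real.sq_sqrt ((sq_nonneg τ).trans (sq_le_sigmaTimeSq τ x))

lemma sigmaTime_pos (hτ : τ ≠ 0) (x : Fin d → ℝ) : 0 < sigmaTime τ x :=
  Real.sqrt_pos.2 (sigmaTimeSq_pos hτ x)

lemma sigmaGraph_mem (hτ : τ ≠ 0) (x : Fin d → ℝ) : sigmaGraph τ x ∈ SigmaSet d τ :=
  ⟨by simp [sigmaGraph, sigmaTime_sq, sigmaTimeSq], sigmaTime_pos hτ x⟩

lemma contDiff_sigmaTimeSq {m : WithTop ℕ∞} (τ : ℝ) : ContDiff ℝ m (sigmaTimeSq (d := d) τ) := by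
  unfold sigmaTimeSq
  fun_prop

lemma contDiff_sigmaTime {m : WithTop ℕ∞} (hτ : τ ≠ 0) : ContDiff ℝ m (sigmaTime (d := d) τ) :=
  (contDiff_sigmaTimeSq τ).sqrt fun x => (sigmaTimeSq_pos hτ x).ne'

lemma contDiff_sigmaGraph {m : WithTop ℕ∞} (hτ : τ ≠ 0) : ContDiff ℝ m (sigmaGraph (d := d) τ) :=
  (contDiff_sigmaTime hτ).prodMk contDiff_id

lemma pd_sigmaTimeSq (τ : ℝ) (i : Fin d) (x : Fin d → ℝ) : pd i (sigmaTimeSq τ) x = 2 * x i := by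
  have hsq (j : Fin d) : HasFDerivAt (fun y : Fin d → ℝ => y j ^ 2)
      ((2 * x j) • (ContinuousLinearMap.proj j : (Fin d → ℝ) →L[ℝ] ℝ)) x := by
    simpa using (hasFDerivAt_apply (𝕜 := ℝ) j x).pow 2
  have h : HasFDerivAt (sigmaTimeSq τ)
      (∑ j, (2 * x j) • (ContinuousLinearMap.proj j : (Fin d → ℝ) →L[ℝ] ℝ)) x :=
    (HasFDerivAt.fun_sum fun j _ => hsq j).const_add (τ ^ 2)
  rw [pd, h.fderiv]
  simp [Pi.single_apply]

lemma pd_sigmaTime (hτ : τ ≠ 0) (i : Fin d) (x : Fin d → ℝ) :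
    pd i (sigmaTime τ) x = x i / sigmaTime τ x := by
  have h : HasFDerivAt (sigmaTime τ)
      ((1 / (2 * sigmaTime τ x)) • fderiv ℝ (sigmaTimeSq τ) x) x :=
    (Real.hasDerivAt_sqrt (sigmaTimeSq_pos hτ x).ne').comp_hasFDerivAt x
      ((contDiff_sigmaTimeSq τ).differentiable one_ne_zero x).hasFDerivAt
  rw [pd, h.fderiv, smul_apply,
    show fderiv ℝ (sigmaTimeSq τ) x (Pi.single i 1) = 2 * x i from pd_sigmaTimeSq τ i x,
    smul_eq_mul]
  field_simp [(sigmaTime_pos hτ x).ne']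

lemma pd_comp_sigmaGraph {f : Spt d → ℝ} {x : Fin d → ℝ} (hτ : τ ≠ 0)
    (hf : DifferentiableAt ℝ f (sigmaGraph τ x)) (i : Fin d) :
    pd i (fun y => f (sigmaGraph τ y)) x
      = x i / sigmaTime τ x * ptD f (sigmaGraph τ x) + pxD i f (sigmaGraph τ x) := by
  have hG : HasFDerivAt (sigmaGraph τ)
      ((fderiv ℝ (sigmaTime τ) x).prod (ContinuousLinearMap.id ℝ _)) x :=
    ((contDiff_sigmaTime hτ).differentiable one_ne_zero x).hasFDerivAt.prodMk (hasFDerivAt_id x)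
  have hsplit : ((pd i (sigmaTime τ) x, Pi.single i 1) : Spt d)
      = pd i (sigmaTime τ) x • ((1, 0) : Spt d) + (0, Pi.single i 1) := by
    simp
  rw [pd, fderiv_fun_comp x hf hG.differentiableAt, hG.fderiv]
  change fderiv ℝ f _ (pd i (sigmaTime τ) x, Pi.single i 1) = _
  rw [hsplit, map_add, map_smul, pd_sigmaTime hτ, smul_eq_mul]
  rfl

lemma LbD_sigmaGraph {f : Spt d → ℝ} {x : Fin d → ℝ} (hτ : τ ≠ 0)
    (hf : DifferentiableAt ℝ f (sigmaGraph τ x)) (i : Fin d) :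
    LbD i f (sigmaGraph τ x) = sigmaTime τ x * pd i (fun y => f (sigmaGraph τ y)) x := by
  rw [pd_comp_sigmaGraph hτ hf, LbD]
  field_simp [(sigmaTime_pos hτ x).ne']
  simp only [sigmaGraph]
  ring

lemma one_le_sigmaTimeSq_div (hτ : τ ≠ 0) (x : Fin d → ℝ) : 1 ≤ sigmaTimeSq τ x / τ ^ 2 :=
  (one_le_div (by positivity)).2 (sq_le_sigmaTimeSq τ x)

lemma one_le_sigmaTime_div (hτ : 0 < τ) (x : Fin d → ℝ) : 1 ≤ sigmaTime τ x / τ := by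
  rw [one_le_div hτ, sigmaTime]
  exact Real.le_sqrt_of_sq_le (sq_le_sigmaTimeSq τ x)

lemma log_sigmaTimeSq_div_le (hτ : 0 < τ) (x : Fin d → ℝ) :
    Real.log (sigmaTimeSq τ x / τ ^ 2) ≤ 2 * arcoshR (sigmaTime τ x / τ) := by
  have ht : 0 < sigmaTime τ x / τ := div_pos (sigmaTime_pos hτ.ne' x) hτ
  rw [← sigmaTime_sq, ← div_pow, Real.log_pow, arcoshR]
  push_cast
  gcongr
  exact le_add_of_nonneg_right (Real.sqrt_nonneg _)

lemma continuous_arcoshR_sigmaTime_div (hτ : 0 < τ) :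
    Continuous fun x : Fin d → ℝ => arcoshR (sigmaTime τ x / τ) :=
  Real.continuousOn_arcosh.comp_continuous
    ((contDiff_sigmaTime (m := 0) hτ.ne').continuous.div_const τ) (one_le_sigmaTime_div hτ)

end Graph

section HardyField

variable {τ : ℝ}

def hardyProfile (τ s : ℝ) : ℝ := τ ^ 2 * (Real.log (s / τ ^ 2) + 1 / 2) / s

def hardyField (τ : ℝ) (i : Fin 2) (x : Fin 2 → ℝ) : ℝ :=
  hardyProfile τ (sigmaTimeSq τ x) * x i

def hardyDiv (τ : ℝ) (x : Fin 2 → ℝ) : ℝ :=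
  τ ^ 2 * (2 * sigmaTimeSq τ x - τ ^ 2 + 2 * Real.log (sigmaTimeSq τ x / τ ^ 2) * τ ^ 2)
    / sigmaTimeSq τ x ^ 2

lemma hasDerivAt_hardyProfile (hτ : τ ≠ 0) {s : ℝ} (hs : 0 < s) :
    HasDerivAt (hardyProfile τ) (τ ^ 2 * (1 / 2 - Real.log (s / τ ^ 2)) / s ^ 2) s := by
  have hlog : HasDerivAt (fun s => Real.log (s / τ ^ 2)) s⁻¹ s := by
    convert ((hasDerivAt_id' s).div_const (τ ^ 2)).log (by positivity) using 1
    field_simp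
  refine (((hlog.add_const (1 / 2)).const_mul (τ ^ 2)).div (hasDerivAt_id' s)
    hs.ne').congr_deriv ?_
  field_simp
  ring

lemma contDiff_hardyField (hτ : τ ≠ 0) (i : Fin 2) : ContDiff ℝ 1 (hardyField τ i) := by
  have hp : ContDiffOn ℝ 1 (hardyProfile τ) (Set.Ioi 0) := by
    intro s hs
    have hs : s ≠ 0 := (Set.mem_Ioi.1 hs).ne'
    unfold hardyProfile
    fun_prop (disch := positivity)
  exact (hp.comp_contDiff (contDiff_sigmaTimeSq τ) fun x => sigmaTimeSq_pos hτ x).mul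
    (contDiff_apply ℝ ℝ i)

lemma pd_hardyField_self (hτ : τ ≠ 0) (i : Fin 2) (x : Fin 2 → ℝ) :
    pd i (hardyField τ i) x = hardyProfile τ (sigmaTimeSq τ x)
      + τ ^ 2 * (1 / 2 - Real.log (sigmaTimeSq τ x / τ ^ 2)) / sigmaTimeSq τ x ^ 2
        * (2 * x i ^ 2) := by
  have h : HasFDerivAt (hardyField τ i) _ x :=
    ((hasDerivAt_hardyProfile hτ (sigmaTimeSq_pos hτ x)).comp_hasFDerivAt x
      ((contDiff_sigmaTimeSq τ).differentiable one_ne_zero x).hasFDerivAt).mul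
      (hasFDerivAt_apply (𝕜 := ℝ) i x)
  rw [pd, h.fderiv]
  simp only [add_apply, smul_apply, ContinuousLinearMap.proj_apply, Pi.single_eq_same,
    smul_eq_mul, Function.comp_apply,
    show fderiv ℝ (sigmaTimeSq τ) x (Pi.single i 1) = 2 * x i from pd_sigmaTimeSq τ i x]
  ring

lemma sum_pd_hardyField (hτ : τ ≠ 0) (x : Fin 2 → ℝ) :
    ∑ i, pd i (hardyField τ i) x = hardyDiv τ x := by
  have hq : sigmaTimeSq τ x = τ ^ 2 + x 0 ^ 2 + x 1 ^ 2 := by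
    simp [sigmaTimeSq, Fin.sum_univ_two, add_assoc]
  simp only [Fin.sum_univ_two, pd_hardyField_self hτ, hardyProfile, hardyDiv]
  field_simp [(sigmaTimeSq_pos hτ x).ne']
  linear_combination (4 * Real.log (sigmaTimeSq τ x / τ ^ 2) - 2) * hq

lemma continuous_hardyDiv (hτ : τ ≠ 0) : Continuous (hardyDiv τ) := by
  rw [← funext (sum_pd_hardyField hτ)]
  exact continuous_finsetSum _ fun i _ => continuous_pd (contDiff_hardyField hτ i) i

lemma div_sigmaTimeSq_le_hardyDiv (hτ : τ ≠ 0) (x : Fin 2 → ℝ) :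
    τ ^ 2 / sigmaTimeSq τ x ≤ hardyDiv τ x := by
  have hq := sigmaTimeSq_pos hτ x
  have hτq := sq_le_sigmaTimeSq τ x
  have hℓ := Real.log_nonneg (one_le_sigmaTimeSq_div hτ x)
  calc τ ^ 2 / sigmaTimeSq τ x = τ ^ 2 * sigmaTimeSq τ x / sigmaTimeSq τ x ^ 2 := by field_simp
    _ ≤ hardyDiv τ x := by
      unfold hardyDiv
      gcongr
      nlinarith

lemma hardyDiv_pos (hτ : τ ≠ 0) (x : Fin 2 → ℝ) : 0 < hardyDiv τ x :=
  (div_pos (by positivity) (sigmaTimeSq_pos hτ x)).trans_le (div_sigmaTimeSq_le_hardyDiv hτ x)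

lemma sq_sum_mul_hardyField_div_le (hτ : 0 < τ) (a x : Fin 2 → ℝ) :
    (∑ i, a i * hardyField τ i x) ^ 2 / hardyDiv τ x
      ≤ 4 * τ ^ 2 * (1 + arcoshR (sigmaTime τ x / τ) ^ 2) * ∑ i, a i ^ 2 := by
  set q := sigmaTimeSq τ x with hq_def
  set ℓ := Real.log (q / τ ^ 2)
  set ρ := arcoshR (sigmaTime τ x / τ)
  set E := 2 * q - τ ^ 2 + 2 * ℓ * τ ^ 2
  have hq : 0 < q := sigmaTimeSq_pos hτ.ne' x
  have hℓ : 0 ≤ ℓ := Real.log_nonneg (one_le_sigmaTimeSq_div hτ.ne' x)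
  have hℓρ : ℓ ≤ 2 * ρ := log_sigmaTimeSq_div_le hτ x
  have hx : ∑ i, x i ^ 2 = q - τ ^ 2 := by simp [hq_def, sigmaTimeSq]
  have hE : 2 * (q - τ ^ 2) ≤ E := by nlinarith [sq_nonneg τ]
  have hE_pos : 0 < E := by nlinarith [sq_le_sigmaTimeSq τ x]
  have hfield : (∑ i, a i * hardyField τ i x) ^ 2 / hardyDiv τ x
      = τ ^ 2 * (ℓ + 1 / 2) ^ 2 * ((∑ i, a i * x i) ^ 2 / E) := by
    have hsum : ∑ i, a i * hardyField τ i x = hardyProfile τ q * ∑ i, a i * x i := by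
      rw [Finset.mul_sum]
      exact Finset.sum_congr rfl fun i _ => by rw [hardyField]; ring
    rw [hsum, show hardyDiv τ x = τ ^ 2 * E / q ^ 2 from rfl, hardyProfile]
    field_simp
    ring
  have hCS : (∑ i, a i * x i) ^ 2 / E ≤ (∑ i, a i ^ 2) / 2 := by
    rw [div_le_div_iff₀ hE_pos two_pos]
    nlinarith [Finset.sum_mul_sq_le_sq_mul_sq Finset.univ a x,
      Finset.sum_nonneg fun i (_ : i ∈ Finset.univ) => sq_nonneg (a i)]
  have hlog : (ℓ + 1 / 2) ^ 2 ≤ 8 * (1 + ρ ^ 2) := by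
    nlinarith [mul_le_mul hℓρ hℓρ hℓ (by linarith), sq_nonneg (ρ - 1)]
  calc (∑ i, a i * hardyField τ i x) ^ 2 / hardyDiv τ x
      = τ ^ 2 * (ℓ + 1 / 2) ^ 2 * ((∑ i, a i * x i) ^ 2 / E) := hfield
    _ ≤ τ ^ 2 * (8 * (1 + ρ ^ 2)) * ((∑ i, a i ^ 2) / 2) := by gcongr
    _ = 4 * τ ^ 2 * (1 + ρ ^ 2) * ∑ i, a i ^ 2 := by ring

end HardyField

theorem integral_div_sigmaTimeSq_mul_sq_le {τ : ℝ} (hτ : 0 < τ) {g : (Fin 2 → ℝ) → ℝ}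
    (hg : ContDiff ℝ 1 g) (hg_supp : HasCompactSupport g) :
    ∫ x, τ ^ 2 / sigmaTimeSq τ x * g x ^ 2
      ≤ 16 * ∫ x, τ ^ 2 * (1 + arcoshR (sigmaTime τ x / τ) ^ 2) * ∑ i, pd i g x ^ 2 := by
  have hgD_int : Integrable fun x => g x ^ 2 * hardyDiv τ x :=
    ((hg.continuous.pow 2).mul (continuous_hardyDiv hτ.ne')).integrable_of_hasCompactSupport
      (hg_supp.comp_left (g := fun y : ℝ => y ^ 2) (zero_pow two_ne_zero)).mul_right
  have hW_int : Integrable fun x =>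
      τ ^ 2 * (1 + arcoshR (sigmaTime τ x / τ) ^ 2) * ∑ i, pd i g x ^ 2 :=
    ((continuous_const.mul (continuous_const.add
      ((continuous_arcoshR_sigmaTime_div hτ).pow 2))).mul (continuous_finsetSum _ fun i _ =>
        (continuous_pd hg i).pow 2)).integrable_of_hasCompactSupport
      (hg_supp.mono' (Function.support_subset_iff'.2 fun x hx => by
        simp [pd, fderiv_of_notMem_tsupport ℝ hx])).mul_left
  calc ∫ x, τ ^ 2 / sigmaTimeSq τ x * g x ^ 2
      ≤ ∫ x, g x ^ 2 * hardyDiv τ x :=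
        integral_mono_of_nonneg
          (ae_of_all _ fun x => mul_nonneg
            (div_nonneg (sq_nonneg τ) (sigmaTimeSq_pos hτ.ne' x).le) (sq_nonneg _))
          hgD_int
          (ae_of_all _ fun x => by
            simpa only [mul_comm (g x ^ 2)] using
              mul_le_mul_of_nonneg_right (div_sigmaTimeSq_le_hardyDiv hτ.ne' x) (sq_nonneg (g x)))
    _ ≤ 4 * ∫ x, (∑ i, pd i g x * hardyField τ i x) ^ 2 / hardyDiv τ x :=
        integral_sq_mul_le_of_sum_pd_eq hg hg_supp (contDiff_hardyField hτ.ne')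
          (sum_pd_hardyField hτ.ne') (hardyDiv_pos hτ.ne')
    _ ≤ 4 * ∫ x, 4 * (τ ^ 2 * (1 + arcoshR (sigmaTime τ x / τ) ^ 2) * ∑ i, pd i g x ^ 2) := by
        refine mul_le_mul_of_nonneg_left ?_ (by norm_num)
        exact integral_mono_of_nonneg
          (ae_of_all _ fun x => div_nonneg (sq_nonneg _) (hardyDiv_pos hτ.ne' x).le)
          (hW_int.const_mul 4)
          (ae_of_all _ fun x => by
            simpa only [mul_assoc] using sq_sum_mul_hardyField_div_le hτ (fun i => pd i g x) x)
    _ = 16 * ∫ x, τ ^ 2 * (1 + arcoshR (sigmaTime τ x / τ) ^ 2) * ∑ i, pd i g x ^ 2 := by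
        rw [integral_const_mul]
        ring

lemma hbInt_div_mul_sq {d : ℕ} (τ : ℝ) (f : Spt d → ℝ) :
    hbInt d τ (fun p => τ / p.1 * f p ^ 2)
      = ∫ x, τ ^ 2 / sigmaTimeSq τ x * f (sigmaGraph τ x) ^ 2 := by
  refine integral_congr_ae (ae_of_all _ fun x => ?_)
  change τ / sigmaTime τ x * f (sigmaGraph τ x) ^ 2 * (τ / sigmaTime τ x)
    = τ ^ 2 / sigmaTimeSq τ x * f (sigmaGraph τ x) ^ 2
  rw [← sigmaTime_sq]
  ring

lemma hbInt_boost_sq {τ : ℝ} (hτ : τ ≠ 0) {f : Spt 2 → ℝ}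
    (hf : ∀ x, DifferentiableAt ℝ f (sigmaGraph τ x)) :
    hbInt 2 τ (fun p => (1 + arcoshR (p.1 / τ) ^ 2) * (τ / p.1) * (LbD 0 f p ^ 2 + LbD 1 f p ^ 2))
      = ∫ x, τ ^ 2 * (1 + arcoshR (sigmaTime τ x / τ) ^ 2)
          * ∑ i, pd i (fun y => f (sigmaGraph τ y)) x ^ 2 := by
  refine integral_congr_ae (ae_of_all _ fun x => ?_)
  change (1 + arcoshR (sigmaTime τ x / τ) ^ 2) * (τ / sigmaTime τ x)
    * (LbD 0 f (sigmaGraph τ x) ^ 2 + LbD 1 f (sigmaGraph τ x) ^ 2) * (τ / sigmaTime τ x)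
    = τ ^ 2 * (1 + arcoshR (sigmaTime τ x / τ) ^ 2)
      * ∑ i, pd i (fun y => f (sigmaGraph τ y)) x ^ 2
  rw [LbD_sigmaGraph hτ (hf x), LbD_sigmaGraph hτ (hf x),
    Fin.sum_univ_two fun i => pd i (fun y => f (sigmaGraph τ y)) x ^ 2]
  field_simp [(sigmaTime_pos hτ x).ne']

/-- Logarithmically weighted Hardy inequality on hyperboloids, `d = 2`. -/
theorem hardy_inequality_2d :
    ∃ C > (0 : ℝ), ∀ τ : ℝ, 0 < τ → ∀ f : Spt 2 → ℝ,
      (∃ U : Set (Spt 2), IsOpen U ∧ SigmaSet 2 τ ⊆ U ∧ ContDiffOn ℝ 1 f U) →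
      HasCompactSupport (fun x : Fin 2 → ℝ =>
        f (Real.sqrt (τ ^ 2 + ∑ i, x i ^ 2), x)) →
      hbInt 2 τ (fun p => τ / p.1 * f p ^ 2) ≤
        C * hbInt 2 τ fun p =>
          (1 + arcoshR (p.1 / τ) ^ 2) * (τ / p.1) *
            ((LbD 0 f p) ^ 2 + (LbD 1 f p) ^ 2) := by
  refine ⟨16, by norm_num, fun τ hτ f ⟨U, hU, hsub, hf⟩ hf_supp => ?_⟩
  have hmem (x : Fin 2 → ℝ) : sigmaGraph τ x ∈ U := hsub (sigmaGraph_mem hτ.ne' x)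
  have hf_diff (x : Fin 2 → ℝ) : DifferentiableAt ℝ f (sigmaGraph τ x) :=
    (hf.contDiffAt (hU.mem_nhds (hmem x))).differentiableAt one_ne_zero
  have hg : ContDiff ℝ 1 (fun x => f (sigmaGraph τ x)) :=
    hf.comp_contDiff (contDiff_sigmaGraph hτ.ne') hmem
  rw [hbInt_div_mul_sq, hbInt_boost_sq hτ.ne' hf_diff]
  exact integral_div_sigmaTimeSq_mul_sq_le hτ hg hf_supp
end
end

section
/- Let d ≥ 1, let (t,x) ∈ ℝ^{1+d} with t > |x|, set τ = √(t² − |x|²), let f be a C¹ function near (t,x), and let v = (v⁰, v̄) ∈ ℝ × ℝ^d satisfy t v⁰ = Σ_i x^i v̄^i (i.e. v is tangent to the hyperboloid Σ_τ at (t,x)). Then (v⁰ ∂_t f + Σ_i v̄^i ∂_{x^i} f)² ≤ τ^{−2} (|v̄|² − (v⁰)²) Σ_{i=1}^d (L^i f)², where all derivatives are evaluated at (t,x). -/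
/-!
Common definitions: spacetime `ℝ^{1+d}` is modeled as `ℝ × (Fin d → ℝ)` with first
coordinate the time `t`.
-/

noncomputable section

open Real MeasureTheory

/-!
Tangency turns `t (v⁰ ∂_t f + v̄ · ∇f)` into `Σ_i v̄^i L^i f`, which Cauchy–Schwarz bounds by
`|v̄| |Lf|`. Cauchy–Schwarz applied to the tangency condition itself gives
`t² (v⁰)² ≤ |x|² |v̄|²`, i.e. `τ² |v̄|² ≤ t² (|v̄|² - (v⁰)²)`: tangent vectors are spacelike.
-/

lemma sum_sq_lt_sq_of_spnorm_lt {d : ℕ} {x : Fin d → ℝ} {t : ℝ} (h : spnorm x < t) :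
    ∑ i, x i ^ 2 < t ^ 2 :=
  (Real.sqrt_lt' ((Real.sqrt_nonneg _).trans_lt h)).1 h

lemma tau_sq_of_spnorm_lt {d : ℕ} {p : Spt d} (hp : spnorm p.2 < p.1) :
    tau p ^ 2 = p.1 ^ 2 - ∑ i, p.2 i ^ 2 :=
  Real.sq_sqrt (sub_nonneg.2 (sum_sq_lt_sq_of_spnorm_lt hp).le)

lemma tau_sq_pos_of_spnorm_lt {d : ℕ} {p : Spt d} (hp : spnorm p.2 < p.1) : 0 < tau p ^ 2 := by
  rw [tau_sq_of_spnorm_lt hp]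
  exact sub_pos.2 (sum_sq_lt_sq_of_spnorm_lt hp)

lemma mul_directional_eq_sum_mul_LbD {d : ℕ} (p : Spt d) (f : Spt d → ℝ) {v0 : ℝ}
    {v : Fin d → ℝ} (htang : p.1 * v0 = ∑ i, p.2 i * v i) :
    p.1 * (v0 * ptD f p + ∑ i, v i * pxD i f p) = ∑ i, v i * LbD i f p := by
  simp only [LbD, mul_add, Finset.sum_add_distrib, Finset.mul_sum]
  rw [add_comm, ← mul_assoc, htang, Finset.sum_mul]
  congr 1 <;> refine Finset.sum_congr rfl fun i _ => by ring

lemma tau_sq_mul_sum_sq_le_of_tangent {d : ℕ} {p : Spt d} (hp : spnorm p.2 < p.1) {v0 : ℝ}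
    {v : Fin d → ℝ} (htang : p.1 * v0 = ∑ i, p.2 i * v i) :
    tau p ^ 2 * ∑ i, v i ^ 2 ≤ p.1 ^ 2 * ((∑ i, v i ^ 2) - v0 ^ 2) := by
  have hcs : (p.1 * v0) ^ 2 ≤ (∑ i, p.2 i ^ 2) * ∑ i, v i ^ 2 :=
    htang ▸ Finset.sum_mul_sq_le_sq_mul_sq _ _ _
  rw [tau_sq_of_spnorm_lt hp]
  nlinarith

theorem boost_coercivity_general (d : ℕ) (p : Spt d) (hp : spnorm p.2 < p.1)
    (f : Spt d → ℝ) (v0 : ℝ) (v : Fin d → ℝ)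
    (htang : p.1 * v0 = ∑ i, p.2 i * v i) :
    (v0 * ptD f p + ∑ i, v i * pxD i f p) ^ 2 ≤
      (tau p ^ 2)⁻¹ * ((∑ i, v i ^ 2) - v0 ^ 2) * ∑ i, LbD i f p ^ 2 := by
  have ht : 0 < p.1 ^ 2 := pow_pos ((Real.sqrt_nonneg _).trans_lt hp) 2
  rw [mul_assoc, le_inv_mul_iff₀ (tau_sq_pos_of_spnorm_lt hp)]
  refine le_of_mul_le_mul_right ?_ ht
  calc tau p ^ 2 * (v0 * ptD f p + ∑ i, v i * pxD i f p) ^ 2 * p.1 ^ 2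
      = tau p ^ 2 * (∑ i, v i * LbD i f p) ^ 2 := by
        rw [← mul_directional_eq_sum_mul_LbD p f htang]; ring
    _ ≤ tau p ^ 2 * ((∑ i, v i ^ 2) * ∑ i, LbD i f p ^ 2) := by
        gcongr
        exact Finset.sum_mul_sq_le_sq_mul_sq _ _ _
    _ ≤ p.1 ^ 2 * ((∑ i, v i ^ 2) - v0 ^ 2) * ∑ i, LbD i f p ^ 2 := by
        rw [← mul_assoc]
        exact mul_le_mul_of_nonneg_right (tau_sq_mul_sum_sq_le_of_tangent hp htang) (by positivity)
    _ = (((∑ i, v i ^ 2) - v0 ^ 2) * ∑ i, LbD i f p ^ 2) * p.1 ^ 2 := by ring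

/-- Coercivity of the boosts over directions tangent to the hyperboloid. -/
theorem boost_coercivity (d : ℕ) (hd : 1 ≤ d) (p : Spt d) (hp : spnorm p.2 < p.1)
    (f : Spt d → ℝ) (hf : ContDiffAt ℝ 1 f p) (v0 : ℝ) (v : Fin d → ℝ)
    (htang : p.1 * v0 = ∑ i, p.2 i * v i) :
    (v0 * ptD f p + ∑ i, v i * pxD i f p) ^ 2 ≤
      (tau p ^ 2)⁻¹ * ((∑ i, v i ^ 2) - v0 ^ 2) * ∑ i, LbD i f p ^ 2 :=
  boost_coercivity_general d p hp f v0 v htang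
end
end

section
/- There is a universal constant C such that for all C¹ functions ψ, φ near a point (t,x) ∈ ℝ^{1+2} with t > |x|, setting τ = √(t² − |x|²): |η(dψ,dφ)| ≤ C ( τ^{−2}|Lψ||Lφ| + t^{−1}|∂_tφ||Lψ| + t^{−2}|Kψ + tψ||∂_tφ| + t^{−1}|ψ||∂_tφ| + t^{−1}τ^{−2}|Kψ + tψ||Lφ| + τ^{−2}|ψ||Lφ| ), where all quantities are evaluated at (t,x). -/
/-!
Common definitions: spacetime `ℝ^{1+d}` is modeled as `ℝ × (Fin d → ℝ)` with first
coordinate the time `t`.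
-/

noncomputable section

open Real MeasureTheory

/-- Cauchy–Schwarz in two variables. -/
lemma cbs_aux_cs2 (u0 u1 v0 v1 : ℝ) :
    |u0*v0 + u1*v1| ≤ Real.sqrt (u0^2+u1^2) * Real.sqrt (v0^2+v1^2) := by
  calc |u0*v0 + u1*v1| = Real.sqrt ((u0*v0+u1*v1)^2) := (Real.sqrt_sq_eq_abs _).symm
    _ ≤ Real.sqrt ((u0^2+u1^2)*(v0^2+v1^2)) :=
        Real.sqrt_le_sqrt (by nlinarith [sq_nonneg (u0*v1 - u1*v0)])
    _ = _ := Real.sqrt_mul (by positivity) _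

lemma cbs_aux_key_abs (t τ2 S T D M Nψ Nφ c u : ℝ) (ht : 0 < t) (hτ2 : 0 < τ2)
    (hle : τ2 ≤ t^2) (hSb : |S| ≤ t * Nψ) (hTb : |T| ≤ t * Nφ)
    (hDb : |D| ≤ Nψ * Nφ) (hNψ0 : 0 ≤ Nψ) (hNφ0 : 0 ≤ Nφ) :
    |(t^2)⁻¹ * (-(c*M)) + (t^2)⁻¹ * (c*(t*u)) + (t^2)⁻¹ * (c*S) + (t^2)⁻¹ * D
      + (t^2)⁻¹ * (τ2⁻¹ * (-(T*M))) + (t^2)⁻¹ * (τ2⁻¹ * (T*(t*u)))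
      + (t^2)⁻¹ * (τ2⁻¹ * (2*(T*S)))| ≤ 3 *
      (τ2⁻¹ * Nψ * Nφ + t⁻¹ * |c| * Nψ + (t^2)⁻¹ * |M| * |c| + t⁻¹ * |u| * |c|
        + t⁻¹ * τ2⁻¹ * |M| * Nφ + τ2⁻¹ * |u| * Nφ) := by
  have ht2 : (0:ℝ) < t^2 := by positivity
  have hinvle : (t^2)⁻¹ ≤ τ2⁻¹ := by
    apply inv_anti₀ hτ2 hle
  have e1 : |(t^2)⁻¹ * (-(c*M))| ≤ (t^2)⁻¹ * |M| * |c| := by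
    rw [abs_mul, abs_neg, abs_mul, abs_inv, abs_of_pos ht2]; exact le_of_eq (by ring)
  have e2 : |(t^2)⁻¹ * (c*(t*u))| ≤ t⁻¹ * |u| * |c| := by
    rw [abs_mul, abs_mul, abs_mul, abs_inv, abs_of_pos ht2, abs_of_pos ht]
    exact le_of_eq (by field_simp)
  have e3 : |(t^2)⁻¹ * (c*S)| ≤ t⁻¹ * |c| * Nψ := by
    rw [abs_mul, abs_mul, abs_inv, abs_of_pos ht2]
    calc (t^2)⁻¹ * (|c| * |S|) ≤ (t^2)⁻¹ * (|c| * (t * Nψ)) := by gcongr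
      _ = t⁻¹ * |c| * Nψ := by field_simp
  have e4 : |(t^2)⁻¹ * D| ≤ τ2⁻¹ * Nψ * Nφ := by
    rw [abs_mul, abs_inv, abs_of_pos ht2]
    calc (t^2)⁻¹ * |D| ≤ (t^2)⁻¹ * (Nψ * Nφ) := by gcongr
      _ ≤ τ2⁻¹ * (Nψ * Nφ) := by gcongr
      _ = τ2⁻¹ * Nψ * Nφ := by ring
  have e5 : |(t^2)⁻¹ * (τ2⁻¹ * (-(T*M)))| ≤ t⁻¹ * τ2⁻¹ * |M| * Nφ := by
    rw [abs_mul, abs_mul, abs_neg, abs_mul, abs_inv, abs_inv, abs_of_pos ht2,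
      abs_of_pos hτ2]
    calc (t^2)⁻¹ * (τ2⁻¹ * (|T| * |M|)) ≤ (t^2)⁻¹ * (τ2⁻¹ * ((t*Nφ) * |M|)) := by
          gcongr
      _ = t⁻¹ * τ2⁻¹ * |M| * Nφ := by field_simp
  have e6 : |(t^2)⁻¹ * (τ2⁻¹ * (T*(t*u)))| ≤ τ2⁻¹ * |u| * Nφ := by
    rw [abs_mul, abs_mul, abs_mul, abs_mul, abs_inv, abs_inv, abs_of_pos ht2,
      abs_of_pos hτ2, abs_of_pos ht]
    calc (t^2)⁻¹ * (τ2⁻¹ * (|T| * (t*|u|)))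
        ≤ (t^2)⁻¹ * (τ2⁻¹ * ((t*Nφ) * (t*|u|))) := by gcongr
      _ = τ2⁻¹ * |u| * Nφ := by field_simp
  have e7 : |(t^2)⁻¹ * (τ2⁻¹ * (2*(T*S)))| ≤ 2 * (τ2⁻¹ * Nψ * Nφ) := by
    rw [abs_mul, abs_mul, abs_mul, abs_mul, abs_inv, abs_inv, abs_of_pos ht2,
      abs_of_pos hτ2]
    calc (t^2)⁻¹ * (τ2⁻¹ * (|2| * (|T| * |S|)))
        ≤ (t^2)⁻¹ * (τ2⁻¹ * (|2| * ((t*Nφ) * (t*Nψ)))) := by gcongr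
      _ = 2 * (τ2⁻¹ * Nψ * Nφ) := by
          rw [show |(2:ℝ)| = 2 from abs_of_pos (by norm_num)]
          field_simp
  have h1 := abs_add_le ((t^2)⁻¹ * (-(c*M)) + (t^2)⁻¹ * (c*(t*u)) + (t^2)⁻¹ * (c*S)
      + (t^2)⁻¹ * D + (t^2)⁻¹ * (τ2⁻¹ * (-(T*M))) + (t^2)⁻¹ * (τ2⁻¹ * (T*(t*u))))
      ((t^2)⁻¹ * (τ2⁻¹ * (2*(T*S))))
  have h2 := abs_add_le ((t^2)⁻¹ * (-(c*M)) + (t^2)⁻¹ * (c*(t*u)) + (t^2)⁻¹ * (c*S)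
      + (t^2)⁻¹ * D + (t^2)⁻¹ * (τ2⁻¹ * (-(T*M)))) ((t^2)⁻¹ * (τ2⁻¹ * (T*(t*u))))
  have h3 := abs_add_le ((t^2)⁻¹ * (-(c*M)) + (t^2)⁻¹ * (c*(t*u)) + (t^2)⁻¹ * (c*S)
      + (t^2)⁻¹ * D) ((t^2)⁻¹ * (τ2⁻¹ * (-(T*M))))
  have h4 := abs_add_le ((t^2)⁻¹ * (-(c*M)) + (t^2)⁻¹ * (c*(t*u)) + (t^2)⁻¹ * (c*S))
      ((t^2)⁻¹ * D)
  have h5 := abs_add_le ((t^2)⁻¹ * (-(c*M)) + (t^2)⁻¹ * (c*(t*u))) ((t^2)⁻¹ * (c*S))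
  have h6 := abs_add_le ((t^2)⁻¹ * (-(c*M))) ((t^2)⁻¹ * (c*(t*u)))
  have p1 : 0 ≤ τ2⁻¹ * Nψ * Nφ := by positivity
  have p2 : 0 ≤ t⁻¹ * |c| * Nψ := by positivity
  have p3 : 0 ≤ (t^2)⁻¹ * |M| * |c| := by positivity
  have p4 : 0 ≤ t⁻¹ * |u| * |c| := by positivity
  have p5 : 0 ≤ t⁻¹ * τ2⁻¹ * |M| * Nφ := by positivity
  have p6 : 0 ≤ τ2⁻¹ * |u| * Nφ := by positivity
  linarith

lemma cbs_aux_key (t x0 x1 a b0 b1 c d0 d1 u : ℝ) (ht : 0 < t) (hlt : x0^2 + x1^2 < t^2) :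
    |(-(a*c) + (b0*d0 + b1*d1))| ≤ 3 *
      ((t^2 - (x0^2+x1^2))⁻¹ * Real.sqrt ((t*b0+x0*a)^2 + (t*b1+x1*a)^2)
          * Real.sqrt ((t*d0+x0*c)^2 + (t*d1+x1*c)^2)
        + t⁻¹ * |c| * Real.sqrt ((t*b0+x0*a)^2 + (t*b1+x1*a)^2)
        + (t^2)⁻¹ * |(t^2 + (x0^2+x1^2)) * a + 2*t*(x0*b0 + x1*b1) + t*u| * |c|
        + t⁻¹ * |u| * |c|
        + t⁻¹ * (t^2 - (x0^2+x1^2))⁻¹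
            * |(t^2 + (x0^2+x1^2)) * a + 2*t*(x0*b0 + x1*b1) + t*u|
            * Real.sqrt ((t*d0+x0*c)^2 + (t*d1+x1*c)^2)
        + (t^2 - (x0^2+x1^2))⁻¹ * |u|
            * Real.sqrt ((t*d0+x0*c)^2 + (t*d1+x1*c)^2)) := by
  have ht2 : (0:ℝ) < t^2 := by positivity
  have hτ2 : (0:ℝ) < t^2 - (x0^2+x1^2) := by linarith
  have hle : t^2 - (x0^2+x1^2) ≤ t^2 := by nlinarith [sq_nonneg x0, sq_nonneg x1]
  have hNψ0 : 0 ≤ Real.sqrt ((t*b0+x0*a)^2 + (t*b1+x1*a)^2) := Real.sqrt_nonneg _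
  have hNφ0 : 0 ≤ Real.sqrt ((t*d0+x0*c)^2 + (t*d1+x1*c)^2) := Real.sqrt_nonneg _
  have hxt : Real.sqrt (x0^2+x1^2) ≤ t := by
    rw [show t = Real.sqrt (t^2) from (Real.sqrt_sq ht.le).symm]
    exact Real.sqrt_le_sqrt hlt.le
  have hSb : |x0*(t*b0+x0*a) + x1*(t*b1+x1*a)| ≤
      t * Real.sqrt ((t*b0+x0*a)^2 + (t*b1+x1*a)^2) :=
    (cbs_aux_cs2 x0 x1 _ _).trans (mul_le_mul_of_nonneg_right hxt hNψ0)
  have hTb : |x0*(t*d0+x0*c) + x1*(t*d1+x1*c)| ≤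
      t * Real.sqrt ((t*d0+x0*c)^2 + (t*d1+x1*c)^2) :=
    (cbs_aux_cs2 x0 x1 _ _).trans (mul_le_mul_of_nonneg_right hxt hNφ0)
  have hDb : |(t*b0+x0*a)*(t*d0+x0*c) + (t*b1+x1*a)*(t*d1+x1*c)| ≤
      Real.sqrt ((t*b0+x0*a)^2 + (t*b1+x1*a)^2)
        * Real.sqrt ((t*d0+x0*c)^2 + (t*d1+x1*c)^2) := cbs_aux_cs2 _ _ _ _
  have hid : (-(a*c) + (b0*d0 + b1*d1)) =
      (t^2)⁻¹ * (-(c*((t^2 + (x0^2+x1^2)) * a + 2*t*(x0*b0 + x1*b1) + t*u)))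
      + (t^2)⁻¹ * (c*(t*u))
      + (t^2)⁻¹ * (c*(x0*(t*b0+x0*a) + x1*(t*b1+x1*a)))
      + (t^2)⁻¹ * ((t*b0+x0*a)*(t*d0+x0*c) + (t*b1+x1*a)*(t*d1+x1*c))
      + (t^2)⁻¹ * ((t^2 - (x0^2+x1^2))⁻¹ * (-((x0*(t*d0+x0*c) + x1*(t*d1+x1*c))
          * ((t^2 + (x0^2+x1^2)) * a + 2*t*(x0*b0 + x1*b1) + t*u))))
      + (t^2)⁻¹ * ((t^2 - (x0^2+x1^2))⁻¹
          * ((x0*(t*d0+x0*c) + x1*(t*d1+x1*c))*(t*u)))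
      + (t^2)⁻¹ * ((t^2 - (x0^2+x1^2))⁻¹
          * (2*((x0*(t*d0+x0*c) + x1*(t*d1+x1*c))*(x0*(t*b0+x0*a) + x1*(t*b1+x1*a))))) := by
    field_simp
    ring
  rw [hid]
  exact cbs_aux_key_abs t (t^2 - (x0^2+x1^2)) _ _ _ _ _ _ c u ht hτ2 hle hSb hTb hDb hNψ0 hNφ0

/-- Null-form bilinear estimate in terms of boosts and the twisted `K`-derivative. -/
theorem bilinear_null_form_estimate :
    ∃ C > (0 : ℝ), ∀ p : Spt 2, spnorm p.2 < p.1 →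
      ∀ ψ φ : Spt 2 → ℝ, ContDiffAt ℝ 1 ψ p → ContDiffAt ℝ 1 φ p →
        |etaD ψ φ p| ≤ C *
          ((tau p ^ 2)⁻¹ * normL ψ p * normL φ p +
            p.1⁻¹ * |ptD φ p| * normL ψ p +
            (p.1 ^ 2)⁻¹ * |KvD ψ p + p.1 * ψ p| * |ptD φ p| +
            p.1⁻¹ * |ψ p| * |ptD φ p| +
            p.1⁻¹ * (tau p ^ 2)⁻¹ * |KvD ψ p + p.1 * ψ p| * normL φ p +
            (tau p ^ 2)⁻¹ * |ψ p| * normL φ p) := by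
  refine ⟨3, by norm_num, ?_⟩
  intro p hp ψ φ _ _
  have hp' : Real.sqrt (p.2 0 ^ 2 + p.2 1 ^ 2) < p.1 := by
    simpa [spnorm, Fin.sum_univ_two] using hp
  have ht : 0 < p.1 := (Real.sqrt_nonneg _).trans_lt hp'
  have hx : p.2 0 ^ 2 + p.2 1 ^ 2 < p.1 ^ 2 := (Real.sqrt_lt' ht).mp hp'
  have htau : tau p ^ 2 = p.1 ^ 2 - (p.2 0 ^ 2 + p.2 1 ^ 2) := by
    rw [tau, Fin.sum_univ_two, Real.sq_sqrt (by linarith)]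
  simp only [etaD, KvD, LbD, normL, Fin.sum_univ_two, htau]
  exact cbs_aux_key p.1 (p.2 0) (p.2 1) (ptD ψ p) (pxD 0 ψ p) (pxD 1 ψ p)
    (ptD φ p) (pxD 0 φ p) (pxD 1 φ p) (ψ p) ht hx
end
end
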